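/- arXiv:2510.19392 — 2 statements merged into one kernel-verified Lean document; each statement's English description precedes it below -/
import Mathlib

section
/- Let H be a real Hilbert space, B : H → H bounded self-adjoint with ⟨B w, w⟩ ≥ C₀ ‖w‖_V² for a seminorm ‖·‖_V, let τ > 0, λ ≥ 0, and let u, v ∈ H with ‖u‖ = ‖v‖ = 1 satisfy (v - u)/τ = -B v + λ • u. Then ⟨B v, v⟩ - ⟨B u, u⟩ ≤ -(2/τ) ‖v - u‖² - C₀ ‖v - u‖_V². -/
open scoped RealInnerProductSpace

theorem stmt_7 {H : Type*} [NormedAddCommGroup H] [InnerProductSpace ℝ H] [CompleteSpace H]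
    (B : H →L[ℝ] H) (hsym : ∀ u v : H, ⟪B u, v⟫ = ⟪u, B v⟫)
    (N : Seminorm ℝ H) (C₀ : ℝ)
    (hcoer : ∀ w : H, C₀ * (N w) ^ 2 ≤ ⟪B w, w⟫)
    (τ lam : ℝ) (hτ : 0 < τ) (hlam : 0 ≤ lam)
    (u v : H) (hu : ‖u‖ = 1) (hv : ‖v‖ = 1)
    (hstep : τ⁻¹ • (v - u) = -B v + lam • u) :
    ⟪B v, v⟫ - ⟪B u, u⟫ ≤ -(2 / τ) * ‖v - u‖ ^ 2 - C₀ * (N (v - u)) ^ 2 := by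
  have h1 : ⟪τ⁻¹ • (v - u), v - u⟫ = ⟪-B v + lam • u, v - u⟫ := by rw [hstep]
  rw [real_inner_smul_left, inner_add_left, inner_neg_left, real_inner_smul_left,
    real_inner_self_eq_norm_sq] at h1
  have h2 : 2 * ⟪u, v - u⟫ = -‖v - u‖ ^ 2 := by
    have e := @norm_sub_sq_real _ _ _ v u
    have hc : ⟪u, v⟫ = ⟪v, u⟫ := real_inner_comm v u
    rw [inner_sub_right, real_inner_self_eq_norm_sq, hu, hv] at *
    nlinarith
  have h3 : 2 * ⟪B v, v - u⟫ = ⟪B v, v⟫ - ⟪B u, u⟫ + ⟪B (v - u), v - u⟫ := by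
    rw [map_sub, inner_sub_left, inner_sub_right, inner_sub_right, hsym u v, real_inner_comm u (B v)]
    ring
  have h4 := hcoer (v - u)
  have h5 : 0 ≤ ‖v - u‖ ^ 2 := by positivity
  have hτ' : 0 < τ⁻¹ := by positivity
  have hdiv : -(2 / τ) * ‖v - u‖ ^ 2 = -(2 * (τ⁻¹ * ‖v - u‖ ^ 2)) := by
    field_simp
  rw [hdiv]
  nlinarith [mul_nonneg hlam h5]
end

section
/- Let H be a real Hilbert space, A : H → H bounded self-adjoint with ⟨Au,u⟩ ≥ 0, τ > 0, ψ ∈ H with ‖ψ‖ = 1, and let w satisfy w + τ A w = ψ. Then ⟨A w, w⟩ ≤ ⟨A ψ, ψ⟩. -/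
open scoped RealInnerProductSpace

theorem stmt_18 {H : Type*} [NormedAddCommGroup H] [InnerProductSpace ℝ H] [CompleteSpace H]
    (A : H →L[ℝ] H) (hsym : ∀ u v : H, ⟪A u, v⟫ = ⟪u, A v⟫)
    (hpos : ∀ u : H, 0 ≤ ⟪A u, u⟫)
    (τ : ℝ) (hτ : 0 < τ) (ψ w : H) (hψ : ‖ψ‖ = 1)
    (hw : w + τ • A w = ψ) :
    ⟪A w, w⟫ ≤ ⟪A ψ, ψ⟫ := by
  subst hw
  have h1 : (0:ℝ) ≤ ⟪A (A w), A w⟫ := hpos _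
  have h2 : (0:ℝ) ≤ ⟪A w, A w⟫ := real_inner_self_nonneg
  have hs : ⟪A (A w), w⟫ = ⟪A w, A w⟫ := hsym _ _
  simp only [map_add, map_smul, inner_add_left, inner_add_right, inner_smul_left,
    inner_smul_right, RCLike.conj_to_real]
  nlinarith [sq_nonneg τ]
end
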